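/- Define P(a,b) = ∑_{i = max(0, b-a)}^{b} q^{(a-1)(b-i)} C_i(q) [a choose b-i]_q. Then for a ≥ 0 and b > 0, P satisfies the recursion P(a+1, b) = P(a, b) + q^{2a}(q^{2b} - 1) P(a, b-1). -/

import Mathlib

noncomputable section

/-- The field `ℚ(q)` of rational functions. -/
abbrev K : Type := RatFunc ℚ

/-- The indeterminate `q`. -/
def q : K := RatFunc.X

/-- The balanced quantum integer `[k] = (q^k - q^{-k})/(q - q⁻¹)`. -/
def qint (k : ℤ) : K := (q ^ k - q ^ (-k)) / (q - q⁻¹)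

/-- The quantum factorial `[k]! = [1][2]⋯[k]`. -/
def qfact : ℕ → K
  | 0 => 1
  | k + 1 => qfact k * qint ((k : ℤ) + 1)

/-- The Gaussian binomial coefficient `[c choose d] = [c]!/([c-d]![d]!)` for `c ≥ d ≥ 0`,
and `0` otherwise. -/
def qbinom (c d : ℤ) : K :=
  if d ≤ c ∧ 0 ≤ d then qfact c.toNat / (qfact (c - d).toNat * qfact d.toNat) else 0

/-- `P(a,b) = ∑_{i=max(0,b-a)}^{b} q^{(a-1)(b-i)} C_i(q) [a choose b-i]`,
with `C_i(q) = ∏_{k=i+1}^{b} (q^{2k}-1)`. -/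
def Pfun (a b : ℕ) : K :=
  ∑ i ∈ Finset.Icc (b - a) b,
    q ^ (((a : ℤ) - 1) * ((b : ℤ) - (i : ℤ))) *
      (∏ k ∈ Finset.Icc (i + 1) b, (q ^ (2 * k) - 1)) *
      qbinom (a : ℤ) ((b : ℤ) - (i : ℤ))

/-! Reindexing by `j = b - i` gives `P(a,b) = ∑_{0 ≤ j ≤ b} q^{(a-1)j} C_{b-j} [a choose j]`. The
q-Pascal rule `[a+1 choose j] = q^{-j} [a choose j] + q^{a+1-j} [a choose j-1]`, a consequence of
`[s+t] = q^{-t}[s] + q^s[t]`, splits `P(a+1,b)` into `P(a,b)` and a second sum; shifting `j ↦ j+1`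
there and splitting off the factor `q^{2b} - 1` of `C_{b-j-1}` turns it into
`q^{2a}(q^{2b}-1) P(a,b-1)`. -/

open Finset

lemma q_ne_zero : q ≠ 0 := RatFunc.X_ne_zero

lemma q_pow_ne_one {n : ℕ} (hn : n ≠ 0) : q ^ n ≠ 1 := by
  intro h
  have hX : (Polynomial.X : Polynomial ℚ) ^ n = 1 :=
    RatFunc.algebraMap_injective ℚ (by simpa [q, RatFunc.algebraMap_X] using h)
  simpa [hn] using congrArg Polynomial.natDegree hX

lemma zpow_sub_zpow_neg_ne_zero {k : ℤ} (hk : 0 < k) : q ^ k - q ^ (-k) ≠ 0 := by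
  intro h
  have h2k : q ^ (2 * k) = 1 := by
    rw [two_mul, zpow_add₀ q_ne_zero]
    nth_rewrite 2 [sub_eq_zero.mp h]
    rw [← zpow_add₀ q_ne_zero, add_neg_cancel, zpow_zero]
  lift 2 * k to ℕ using by omega with n hn
  exact q_pow_ne_one (n := n) (by omega) (by exact_mod_cast h2k)

lemma qint_ne_zero {k : ℤ} (hk : 0 < k) : qint k ≠ 0 := by
  refine div_ne_zero (zpow_sub_zpow_neg_ne_zero hk) ?_
  simpa using zpow_sub_zpow_neg_ne_zero one_pos

lemma qfact_ne_zero : ∀ n : ℕ, qfact n ≠ 0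
  | 0 => one_ne_zero
  | n + 1 => mul_ne_zero (qfact_ne_zero n) (qint_ne_zero (by positivity))

lemma qint_add (s t : ℤ) : qint (s + t) = q ^ (-t) * qint s + q ^ s * qint t := by
  simp only [qint, mul_div_assoc', ← add_div, neg_add, zpow_add₀ q_ne_zero]
  ring

lemma qbinom_of_neg {c d : ℤ} (h : d < 0) : qbinom c d = 0 := by
  rw [qbinom, if_neg (by omega)]

lemma qbinom_of_lt {c d : ℤ} (h : c < d) : qbinom c d = 0 := by
  rw [qbinom, if_neg (by omega)]

lemma qbinom_natCast {n m : ℕ} (h : m ≤ n) :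
    qbinom n m = qfact n / (qfact (n - m) * qfact m) := by
  rw [qbinom, if_pos ⟨by omega, by omega⟩]
  congr 3
  all_goals omega

lemma qbinom_zero_right (n : ℕ) : qbinom n 0 = 1 := by
  simpa [qfact, qfact_ne_zero] using qbinom_natCast (Nat.zero_le n)

lemma qbinom_self (n : ℕ) : qbinom n n = 1 := by
  simpa [qfact, qfact_ne_zero] using qbinom_natCast (le_refl n)

lemma qbinom_pascal_of_pos_of_le (a : ℕ) {j : ℤ} (hj0 : 0 < j) (hja : j ≤ a) :
    qbinom ((a : ℤ) + 1) j = q ^ (-j) * qbinom a j + q ^ ((a : ℤ) + 1 - j) * qbinom a (j - 1) := by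
  obtain ⟨l, rfl⟩ : ∃ l : ℕ, j = l + 1 := ⟨(j - 1).toNat, by omega⟩
  obtain ⟨r, rfl⟩ : ∃ r : ℕ, a = l + r + 1 := ⟨a - l - 1, by omega⟩
  have hsplit := qint_add ((r : ℤ) + 1) ((l : ℤ) + 1)
  have hfact := qfact_ne_zero
  have hr := qint_ne_zero (k := (r : ℤ) + 1) (by omega)
  have hl := qint_ne_zero (k := (l : ℤ) + 1) (by omega)
  rw [show ((l + r + 1 : ℕ) : ℤ) + 1 = (l + r + 2 : ℕ) by push_cast; ring,
    show (l : ℤ) + 1 = (l + 1 : ℕ) by push_cast; ring, show ((l + 1 : ℕ) : ℤ) - 1 = l by simp,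
    qbinom_natCast (by omega), qbinom_natCast (by omega), qbinom_natCast (by omega),
    show l + r + 2 - (l + 1) = r + 1 by omega, show l + r + 1 - (l + 1) = r by omega,
    show l + r + 1 - l = r + 1 by omega,
    show ((l + r + 2 : ℕ) : ℤ) - (l + 1 : ℕ) = r + 1 by push_cast; ring]
  simp only [qfact]
  push_cast
  rw [show (l : ℤ) + r + 1 + 1 = (r + 1) + (l + 1) by ring, hsplit]
  field_simp

lemma qbinom_pascal (a : ℕ) (j : ℤ) :
    qbinom ((a : ℤ) + 1) j = q ^ (-j) * qbinom a j + q ^ ((a : ℤ) + 1 - j) * qbinom a (j - 1) := by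
  rcases lt_trichotomy j 0 with hj | rfl | hj
  · simp [qbinom_of_neg hj, qbinom_of_neg (show j - 1 < 0 by omega)]
  · rw [qbinom_of_neg (show (0 : ℤ) - 1 < 0 by norm_num), mul_zero, add_zero, neg_zero,
      zpow_zero, one_mul, qbinom_zero_right]
    exact_mod_cast qbinom_zero_right (a + 1)
  rcases le_or_gt j a with hja | hja
  · exact qbinom_pascal_of_pos_of_le a hj hja
  rcases eq_or_lt_of_le (show (a : ℤ) + 1 ≤ j by omega) with rfl | hja'
  · rw [qbinom_of_lt (show (a : ℤ) < a + 1 by omega), add_sub_cancel_right, sub_self, zpow_zero,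
      qbinom_self]
    simpa using qbinom_self (a + 1)
  · simp [qbinom_of_lt hja', qbinom_of_lt hja, qbinom_of_lt (show (a : ℤ) < j - 1 by omega)]

lemma Pfun_eq_sum_range (a b : ℕ) :
    Pfun a b = ∑ j ∈ range (b + 1),
      q ^ (((a : ℤ) - 1) * j) * (∏ k ∈ Icc (b + 1 - j) b, (q ^ (2 * k) - 1)) * qbinom a j := by
  have hsupp : Pfun a b = ∑ i ∈ range (b + 1),
      q ^ (((a : ℤ) - 1) * ((b : ℤ) - i)) * (∏ k ∈ Icc (i + 1) b, (q ^ (2 * k) - 1)) *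
        qbinom a ((b : ℤ) - i) := by
    refine sum_subset (fun i hi => by simp only [mem_Icc, mem_range] at hi ⊢; omega)
      fun i hi hi' => ?_
    simp only [mem_Icc, mem_range] at hi hi'
    rw [qbinom_of_lt (by omega), mul_zero]
  rw [hsupp, ← sum_range_reflect]
  refine sum_congr rfl fun j hj => ?_
  simp only [mem_range] at hj
  rw [show b + 1 - 1 - j = b - j by omega, Nat.cast_sub (by omega), sub_sub_cancel,
    show b - j + 1 = b + 1 - j by omega]

lemma Pfun_succ_left (a b : ℕ) :
    Pfun (a + 1) b = Pfun a b + ∑ j ∈ range (b + 1),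
      q ^ ((a : ℤ) * j + (a + 1 - j)) * (∏ k ∈ Icc (b + 1 - j) b, (q ^ (2 * k) - 1)) *
        qbinom a (j - 1) := by
  simp only [Pfun_eq_sum_range, ← sum_add_distrib]
  refine sum_congr rfl fun j _ => ?_
  push_cast
  have hleft : q ^ ((a : ℤ) * j) * q ^ (-(j : ℤ)) = q ^ (((a : ℤ) - 1) * j) := by
    rw [← zpow_add₀ q_ne_zero]
    ring_nf
  rw [qbinom_pascal, add_sub_cancel_right, ← hleft, zpow_add₀ q_ne_zero]
  ring

lemma sum_shift_eq_mul_Pfun (a n : ℕ) :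
    ∑ j ∈ range (n + 2),
      q ^ ((a : ℤ) * j + (a + 1 - j)) * (∏ k ∈ Icc (n + 2 - j) (n + 1), (q ^ (2 * k) - 1)) *
        qbinom a (j - 1) =
      q ^ (2 * a) * (q ^ (2 * (n + 1)) - 1) * Pfun a n := by
  rw [sum_range_succ', Pfun_eq_sum_range, mul_sum]
  simp only [Nat.cast_zero, zero_sub, qbinom_of_neg (show (-1 : ℤ) < 0 by norm_num), mul_zero,
    add_zero]
  refine sum_congr rfl fun j hj => ?_
  simp only [mem_range] at hj
  rw [show n + 2 - (j + 1) = n + 1 - j by omega, prod_Icc_succ_top (by omega)]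
  push_cast
  rw [add_sub_cancel_right,
    show (a : ℤ) * (j + 1) + (a + 1 - (j + 1)) = (a - 1) * j + 2 * a by ring, zpow_add₀ q_ne_zero]
  norm_cast
  ring

/-- The recursion `P(a+1,b) = P(a,b) + q^{2a}(q^{2b} - 1) P(a,b-1)` for `b > 0`. -/
theorem Pfun_recursion (a b : ℕ) (hb : 0 < b) :
    Pfun (a + 1) b = Pfun a b + q ^ (2 * a) * (q ^ (2 * b) - 1) * Pfun a (b - 1) := by
  obtain ⟨n, rfl⟩ := Nat.exists_eq_add_one_of_ne_zero hb.ne'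
  rw [Pfun_succ_left, Nat.add_sub_cancel, ← sum_shift_eq_mul_Pfun]

end
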